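/- There exists a constant C such that for every n ≥ 1 and every sequence w_1, …, w_n of positive integers with W = w_1 + … + w_n, there exists a full binary tree T with exactly n leaves such that for each i (1 ≤ i ≤ n), the depth of the i-th leaf of T in left-to-right order is at most C · (1 + Nat.log 2 (W / w_i)). -/

import Mathlib

/-!
Split the weights at a "weighted median" leaf `x`: the leaves `A` to its left and `B` to its right
each carry at most half of the total weight `W`. Recursively build trees for `A` and `B` and join
them as `node T_A (node x T_B)`. A leaf of `A` or `B` moves down by at most two levels, while passing
from the weight of its part to `W` at least doubles `W / wᵢ`, so `log₂ (W / wᵢ)` grows by at least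
one. Hence by induction leaf `i` ends up at depth at most `2 * (1 + log₂ (W / wᵢ))`.
-/

/-- Full binary trees. -/
inductive FullBinTree : Type
  | leaf : FullBinTree
  | node : FullBinTree → FullBinTree → FullBinTree

/-- The list of depths of the leaves of a full binary tree, in left-to-right
    order. -/
def leafDepths : FullBinTree → List ℕ
  | .leaf => [0]
  | .node l r => (leafDepths l).map (· + 1) ++ (leafDepths r).map (· + 1)

theorem List.Forall₂.le_trans {α : Type*} [Preorder α] {a b c : List α}
    (hab : Forall₂ (· ≤ ·) a b) (hbc : Forall₂ (· ≤ ·) b c) : Forall₂ (· ≤ ·) a c := by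
  induction hab generalizing c with
  | nil => exact hbc
  | cons hxy _ ih =>
    obtain ⟨z, l, hyz, hl, rfl⟩ := forall₂_cons_left_iff.mp hbc
    exact .cons (hxy.trans hyz) (ih hl)

theorem List.Forall₂.map_succ {a b : List ℕ} (h : Forall₂ (· ≤ ·) a b) :
    Forall₂ (· ≤ ·) (a.map (· + 1)) (b.map (· + 1)) :=
  forall₂_map_left_iff.mpr (forall₂_map_right_iff.mpr (h.imp fun _ _ => Nat.succ_le_succ))

theorem List.forall₂_le_map_succ (b : List ℕ) : Forall₂ (· ≤ ·) b (b.map (· + 1)) :=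
  forall₂_map_right_iff.mpr (forall₂_same.mpr fun x _ => x.le_succ)

theorem List.forall₂_map_map {α β : Type*} {R : β → β → Prop} {f g : α → β} {l : List α}
    (h : ∀ a ∈ l, R (f a) (g a)) : Forall₂ R (l.map f) (l.map g) :=
  forall₂_map_left_iff.mpr (forall₂_map_right_iff.mpr (forall₂_same.mpr h))

-- The empty list is admitted so that the empty parts of a split need no separate treatment.
def DepthBounded (b : List ℕ) : Prop :=
  b = [] ∨ ∃ T : FullBinTree, List.Forall₂ (· ≤ ·) (leafDepths T) b

namespace DepthBounded

theorem singleton (d : ℕ) : DepthBounded [d] :=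
  .inr ⟨.leaf, .cons (Nat.zero_le d) .nil⟩

theorem mono {b b' : List ℕ} (hb : DepthBounded b) (hbb' : List.Forall₂ (· ≤ ·) b b') :
    DepthBounded b' := by
  rcases hb with rfl | ⟨T, hT⟩
  · exact .inl (List.forall₂_nil_left_iff.mp hbb')
  · exact .inr ⟨T, hT.le_trans hbb'⟩

theorem map_succ_append {b₁ b₂ : List ℕ} (h₁ : DepthBounded b₁) (h₂ : DepthBounded b₂) :
    DepthBounded (b₁.map (· + 1) ++ b₂.map (· + 1)) := by
  rcases h₁ with rfl | ⟨T₁, hT₁⟩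
  · simpa using h₂.mono (List.forall₂_le_map_succ b₂)
  rcases h₂ with rfl | ⟨T₂, hT₂⟩
  · simpa using DepthBounded.mono (.inr ⟨T₁, hT₁⟩) (List.forall₂_le_map_succ b₁)
  exact .inr ⟨.node T₁ T₂, List.rel_append hT₁.map_succ hT₂.map_succ⟩

end DepthBounded

theorem List.exists_eq_append_cons_sum_le_lt :
    ∀ (ws : List ℕ) {t : ℕ}, t < ws.sum →
      ∃ A x B, ws = A ++ x :: B ∧ A.sum ≤ t ∧ t < A.sum + x
  | [], _, h => absurd h (Nat.not_lt_zero _)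
  | y :: ys, t, h => by
    by_cases hty : t < y
    · exact ⟨[], y, ys, rfl, Nat.zero_le t, by simpa using hty⟩
    · obtain ⟨A, x, B, rfl, hA, hAx⟩ :=
        exists_eq_append_cons_sum_le_lt ys (t := t - y) (by simp at h; omega)
      exact ⟨y :: A, x, B, rfl, by simp; omega, by simp; omega⟩

theorem List.exists_eq_append_cons_two_mul_sum_le {ws : List ℕ} (h : 0 < ws.sum) :
    ∃ A x B, ws = A ++ x :: B ∧ 2 * A.sum ≤ ws.sum ∧ 2 * B.sum ≤ ws.sum := by
  obtain ⟨A, x, B, hws, hA, hAx⟩ :=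
    ws.exists_eq_append_cons_sum_le_lt (Nat.div_lt_self h one_lt_two)
  have hsum : ws.sum = A.sum + x + B.sum := by simp [hws, Nat.add_assoc]
  exact ⟨A, x, B, hws, by omega, by omega⟩

def depthBound (W w : ℕ) : ℕ := 2 * (1 + Nat.log 2 (W / w))

theorem two_le_depthBound (W w : ℕ) : 2 ≤ depthBound W w := by
  unfold depthBound; omega

theorem depthBound_add_two_le {V W w : ℕ} (hw : 0 < w) (hwV : w ≤ V) (hVW : 2 * V ≤ W) :
    depthBound V w + 2 ≤ depthBound W w := by
  have hq : V / w ≠ 0 := (Nat.div_pos hwV hw).ne'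
  have hdouble : V / w * 2 ≤ W / w :=
    calc V / w * 2 = 2 * (V / w) := Nat.mul_comm _ _
      _ ≤ 2 * V / w := Nat.mul_div_le_mul_div_assoc 2 V w
      _ ≤ W / w := Nat.div_le_div_right hVW
  have hlog : Nat.log 2 (V / w) + 1 ≤ Nat.log 2 (W / w) :=
    Nat.log_mul_base one_lt_two hq ▸ Nat.log_mono_right hdouble
  unfold depthBound; omega

theorem depthBounded_depthBound (ws : List ℕ) (hws : ∀ w ∈ ws, 0 < w) :
    DepthBounded (ws.map (depthBound ws.sum)) := by
  induction hn : ws.length using Nat.strong_induction_on generalizing ws with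
  | _ n ih =>
  by_cases hne : ws = []
  · exact .inl (by simp [hne])
  obtain ⟨w, hw⟩ := List.exists_mem_of_ne_nil ws hne
  have hpos : 0 < ws.sum := (hws w hw).trans_le (List.le_sum_of_mem hw)
  obtain ⟨A, x, B, rfl, hA, hB⟩ := List.exists_eq_append_cons_two_mul_sum_le hpos
  simp only [List.length_append, List.length_cons] at hn
  have hTA := ih _ (by omega) A (fun w hw => hws w (by simp [hw])) rfl
  have hTB := ih _ (by omega) B (fun w hw => hws w (by simp [hw])) rfl
  -- the tree `node T_A (node leaf T_B)`
  have hT := hTA.map_succ_append ((DepthBounded.singleton 0).map_succ_append hTB)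
  refine hT.mono ?_
  simp only [List.map_append, List.map_cons, List.map_map, List.map_nil]
  refine List.rel_append ?_ (.cons ?_ ?_)
  · refine List.forall₂_map_map fun a ha => ?_
    have := depthBound_add_two_le (hws a (by simp [ha])) (List.le_sum_of_mem ha) hA
    simp only [Function.comp_apply]; omega
  · exact two_le_depthBound _ _
  · exact List.forall₂_map_map fun b hb =>
      depthBound_add_two_le (hws b (by simp [hb])) (List.le_sum_of_mem hb) hB

/-- There is a constant `C` such that for every `n ≥ 1` and positive weights
    `w 0, …, w (n-1)` with sum `W`, there is a full binary tree with exactly `n`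
    leaves in which the `i`-th leaf has depth at most `C · (1 + log₂(W / w i))`. -/
theorem exists_weight_balanced_tree :
    ∃ C : ℕ, ∀ n : ℕ, 1 ≤ n → ∀ w : ℕ → ℕ, (∀ i < n, 0 < w i) →
      ∃ T : FullBinTree, (leafDepths T).length = n ∧
        ∀ i < n, (leafDepths T).getD i 0 ≤
          C * (1 + Nat.log 2 ((∑ j ∈ Finset.range n, w j) / w i)) := by
  refine ⟨2, fun n hn w hw => ?_⟩
  set ws := (List.range n).map w
  have hsum : ws.sum = ∑ j ∈ Finset.range n, w j := by
    rw [Finset.sum_eq_multiset_sum, Finset.range_val, Multiset.range, Multiset.map_coe,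
      Multiset.sum_coe]
  have hpos : ∀ x ∈ ws, 0 < x := by
    simp only [ws, List.mem_map, List.mem_range]
    rintro _ ⟨i, hi, rfl⟩
    exact hw i hi
  rcases depthBounded_depthBound ws hpos with hnil | ⟨T, hT⟩
  · simp [ws] at hnil; omega
  have hlen : (leafDepths T).length = n := by simpa [ws] using hT.length_eq
  refine ⟨T, hlen, fun i hi => ?_⟩
  have := List.forall₂_iff_get.mp hT |>.2 i (by omega) (by simp [ws, hi])
  rw [List.getD_eq_getElem _ _ (by omega)]
  simpa [ws, hi, hsum, depthBound] using this
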